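/- arXiv:1803.06773 — 6 statements merged into one kernel-verified Lean document; each statement's English description precedes it below -/
import Mathlib

section
/- The soft Bellman backup operator is a contraction in the sup-norm: for any two bounded functions Q1, Q2 on state-action pairs, the soft Bellman backups T(Q1) and T(Q2) satisfy ‖T(Q1) − T(Q2)‖_∞ ≤ γ‖Q1 − Q2‖_∞, where T(Q)(s,a) = r(s,a) + γ E_{s'∼p(·|s,a)}[softmax_{a'} Q(s',a')] and softmax_a Q(s,a) = log Σ_a exp(Q(s,a)). -/
lemma lse_diff_le {A : Type} [Fintype A] [Nonempty A] (f g : A → ℝ) (M : ℝ)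
    (h : ∀ a, f a - g a ≤ M) :
    Real.log (∑ a, Real.exp (f a)) - Real.log (∑ a, Real.exp (g a)) ≤ M := by
  have hpos : 0 < ∑ a, Real.exp (g a) :=
    Finset.sum_pos (fun a _ => Real.exp_pos _) Finset.univ_nonempty
  have hle : ∑ a, Real.exp (f a) ≤ Real.exp M * ∑ a, Real.exp (g a) := by
    rw [Finset.mul_sum]
    refine Finset.sum_le_sum fun a _ => ?_
    rw [← Real.exp_add]
    exact Real.exp_le_exp.2 (by linarith [h a])
  rw [sub_le_iff_le_add]
  calc Real.log (∑ a, Real.exp (f a)) ≤ Real.log (Real.exp M * ∑ a, Real.exp (g a)) :=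
        Real.log_le_log (Finset.sum_pos (fun a _ => Real.exp_pos _) Finset.univ_nonempty) hle
    _ = M + Real.log (∑ a, Real.exp (g a)) := by
        rw [Real.log_mul (Real.exp_ne_zero _) (ne_of_gt hpos), Real.log_exp]

/-- The soft Bellman backup operator is a γ-contraction in sup-norm. -/
theorem soft_bellman_contraction
    {S A : Type} [Fintype S] [Fintype A] [Nonempty S] [Nonempty A]
    (r : S → A → ℝ) (γ : ℝ) (hγ0 : 0 ≤ γ) (hγ1 : γ < 1)
    (p : S → A → S → ℝ)
    (hp0 : ∀ s a s', 0 ≤ p s a s')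
    (hp1 : ∀ s a, ∑ s', p s a s' = 1)
    (T : (S → A → ℝ) → (S → A → ℝ))
    (hT : ∀ Q s a, T Q s a =
      r s a + γ * ∑ s', p s a s' * Real.log (∑ a', Real.exp (Q s' a')))
    (Q₁ Q₂ : S → A → ℝ) :
    (⨆ sa : S × A, |T Q₁ sa.1 sa.2 - T Q₂ sa.1 sa.2|) ≤
      γ * ⨆ sa : S × A, |Q₁ sa.1 sa.2 - Q₂ sa.1 sa.2| := by
  set M := ⨆ sa : S × A, |Q₁ sa.1 sa.2 - Q₂ sa.1 sa.2| with hM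
  have hbdd : BddAbove (Set.range fun sa : S × A => |Q₁ sa.1 sa.2 - Q₂ sa.1 sa.2|) :=
    Set.Finite.bddAbove (Set.finite_range _)
  have hMle : ∀ s a, |Q₁ s a - Q₂ s a| ≤ M := fun s a =>
    le_ciSup hbdd (⟨s, a⟩ : S × A)
  -- logsumexp bound
  have hL : ∀ s', |Real.log (∑ a', Real.exp (Q₁ s' a')) -
      Real.log (∑ a', Real.exp (Q₂ s' a'))| ≤ M := by
    intro s'
    rw [abs_sub_le_iff]
    constructor
    · exact lse_diff_le _ _ M fun a => (abs_le.1 (hMle s' a)).2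
    · exact lse_diff_le _ _ M fun a => by
        have := (abs_le.1 (hMle s' a)).1; linarith
  refine ciSup_le fun ⟨s, a⟩ => ?_
  rw [hT, hT]
  have : r s a + γ * ∑ s', p s a s' * Real.log (∑ a', Real.exp (Q₁ s' a'))
      - (r s a + γ * ∑ s', p s a s' * Real.log (∑ a', Real.exp (Q₂ s' a')))
      = γ * ∑ s', p s a s' * (Real.log (∑ a', Real.exp (Q₁ s' a'))
        - Real.log (∑ a', Real.exp (Q₂ s' a'))) := by
    simp only [Finset.mul_sum, mul_sub]
    rw [Finset.sum_sub_distrib]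
    ring
  rw [this, abs_mul, abs_of_nonneg hγ0]
  refine mul_le_mul_of_nonneg_left ?_ hγ0
  calc |∑ s', p s a s' * (Real.log (∑ a', Real.exp (Q₁ s' a'))
        - Real.log (∑ a', Real.exp (Q₂ s' a')))|
      ≤ ∑ s', |p s a s' * (Real.log (∑ a', Real.exp (Q₁ s' a'))
        - Real.log (∑ a', Real.exp (Q₂ s' a')))| := Finset.abs_sum_le_sum_abs _ _
    _ ≤ ∑ s', p s a s' * M := by
        refine Finset.sum_le_sum fun s' _ => ?_
        rw [abs_mul, abs_of_nonneg (hp0 s a s')]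
        exact mul_le_mul_of_nonneg_left (hL s') (hp0 s a s')
    _ = M := by rw [← Finset.sum_mul, hp1, one_mul]
end

section
/- Upper bound for composed Q-functions (first half of Lemma 1): Let Q1*, Q2* be the unique fixed points of the soft Bellman operators for rewards r1 and r2 respectively, and let Q_C* be the fixed point for the reward r_C = (r1+r2)/2. Then Q_C*(s,a) ≤ Q_Σ(s,a) := (Q1*(s,a)+Q2*(s,a))/2 for all states s and actions a. -/
open Finset

lemma lse_avg_le {A : Type} [Fintype A] [Nonempty A] (x y : A → ℝ) :
    Real.log (∑ a, Real.exp ((x a + y a) / 2)) ≤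
      (Real.log (∑ a, Real.exp (x a)) + Real.log (∑ a, Real.exp (y a))) / 2 := by
  have hx : (0:ℝ) < ∑ a, Real.exp (x a) :=
    Finset.sum_pos (fun a _ => Real.exp_pos _) univ_nonempty
  have hy : (0:ℝ) < ∑ a, Real.exp (y a) :=
    Finset.sum_pos (fun a _ => Real.exp_pos _) univ_nonempty
  have hz : (0:ℝ) < ∑ a, Real.exp ((x a + y a) / 2) :=
    Finset.sum_pos (fun a _ => Real.exp_pos _) univ_nonempty
  have cs := Finset.sum_mul_sq_le_sq_mul_sq univ (fun a => Real.exp (x a / 2))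
    (fun a => Real.exp (y a / 2))
  have h1 : (∑ a, Real.exp ((x a + y a) / 2)) ^ 2 ≤
      (∑ a, Real.exp (x a)) * ∑ a, Real.exp (y a) := by
    calc (∑ a, Real.exp ((x a + y a) / 2)) ^ 2
        = (∑ a, Real.exp (x a / 2) * Real.exp (y a / 2)) ^ 2 := by
          congr 1; apply Finset.sum_congr rfl; intro a _
          rw [← Real.exp_add]; congr 1; ring
      _ ≤ (∑ a, Real.exp (x a / 2) ^ 2) * ∑ a, Real.exp (y a / 2) ^ 2 := cs
      _ = (∑ a, Real.exp (x a)) * ∑ a, Real.exp (y a) := by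
          have hsq : ∀ t : ℝ, Real.exp (t / 2) ^ 2 = Real.exp t := by
            intro t; rw [sq, ← Real.exp_add]; congr 1; ring
          simp only [hsq]
  have h2 := Real.log_le_log (by positivity) h1
  rw [Real.log_pow, Real.log_mul hx.ne' hy.ne'] at h2
  push_cast at h2
  linarith

/-- Upper bound of Lemma 1: the optimal soft Q-function of the averaged reward
is bounded above by the average of the constituent optimal soft Q-functions. -/
theorem composed_Q_upper_bound
    {S A : Type} [Fintype S] [Fintype A] [Nonempty A]
    (γ : ℝ) (hγ0 : 0 ≤ γ) (hγ1 : γ < 1)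
    (p : S → A → S → ℝ)
    (hp0 : ∀ s a s', 0 ≤ p s a s')
    (hp1 : ∀ s a, ∑ s', p s a s' = 1)
    (r₁ r₂ : S → A → ℝ) (Q₁ Q₂ QC : S → A → ℝ)
    (hQ₁ : ∀ s a, Q₁ s a =
      r₁ s a + γ * ∑ s', p s a s' * Real.log (∑ a', Real.exp (Q₁ s' a')))
    (hQ₂ : ∀ s a, Q₂ s a =
      r₂ s a + γ * ∑ s', p s a s' * Real.log (∑ a', Real.exp (Q₂ s' a')))
    (hQC : ∀ s a, QC s a =
      (r₁ s a + r₂ s a) / 2 +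
        γ * ∑ s', p s a s' * Real.log (∑ a', Real.exp (QC s' a'))) :
    ∀ s a, QC s a ≤ (Q₁ s a + Q₂ s a) / 2 := by
  intro s₀ a₀
  haveI : Nonempty S := ⟨s₀⟩
  set F : S × A → ℝ := fun x => QC x.1 x.2 - (Q₁ x.1 x.2 + Q₂ x.1 x.2) / 2 with hF
  set M : ℝ := Finset.sup' univ univ_nonempty F with hM
  have hFle : ∀ s a, F (s, a) ≤ M := fun s a =>
    Finset.le_sup' F (Finset.mem_univ (s, a))
  -- key pointwise bound on log-sum-exps
  have key : ∀ s' : S, Real.log (∑ a', Real.exp (QC s' a')) ≤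
      (Real.log (∑ a', Real.exp (Q₁ s' a')) +
        Real.log (∑ a', Real.exp (Q₂ s' a'))) / 2 + M := by
    intro s'
    have h1 : Real.log (∑ a', Real.exp (QC s' a')) ≤
        Real.log (∑ a', Real.exp ((Q₁ s' a' + Q₂ s' a') / 2 + M)) := by
      apply Real.log_le_log (Finset.sum_pos (fun a _ => Real.exp_pos _) univ_nonempty)
      apply Finset.sum_le_sum
      intro a' _
      apply Real.exp_le_exp.2
      have := hFle s' a'
      simp only [hF] at this
      linarith
    have h2 : (∑ a', Real.exp ((Q₁ s' a' + Q₂ s' a') / 2 + M)) =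
        Real.exp M * ∑ a', Real.exp ((Q₁ s' a' + Q₂ s' a') / 2) := by
      rw [Finset.mul_sum]
      apply Finset.sum_congr rfl
      intro a' _
      rw [← Real.exp_add]; ring_nf
    have h3 := lse_avg_le (fun a' => Q₁ s' a') (fun a' => Q₂ s' a')
    rw [h2, Real.log_mul (Real.exp_pos _).ne'
      (Finset.sum_pos (fun a _ => Real.exp_pos _) univ_nonempty).ne',
      Real.log_exp] at h1
    linarith
  -- hence F ≤ γ M pointwise
  have hstep : ∀ s a, F (s, a) ≤ γ * M := by
    intro s a
    have hsum : (∑ s', p s a s' * Real.log (∑ a', Real.exp (QC s' a'))) ≤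
        ∑ s', p s a s' * ((Real.log (∑ a', Real.exp (Q₁ s' a')) +
          Real.log (∑ a', Real.exp (Q₂ s' a'))) / 2 + M) :=
      Finset.sum_le_sum fun s' _ => mul_le_mul_of_nonneg_left (key s') (hp0 s a s')
    have hexp : (∑ s', p s a s' * ((Real.log (∑ a', Real.exp (Q₁ s' a')) +
          Real.log (∑ a', Real.exp (Q₂ s' a'))) / 2 + M)) =
        ((∑ s', p s a s' * Real.log (∑ a', Real.exp (Q₁ s' a'))) +
          ∑ s', p s a s' * Real.log (∑ a', Real.exp (Q₂ s' a'))) / 2 + M := by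
      simp only [mul_add]
      rw [Finset.sum_add_distrib, ← Finset.sum_mul, hp1 s a, one_mul]
      congr 1
      rw [← Finset.sum_add_distrib, Finset.sum_div]
      exact Finset.sum_congr rfl fun s' _ => by ring
    rw [hexp] at hsum
    have h5 := mul_le_mul_of_nonneg_left hsum hγ0
    have e1 := hQ₁ s a
    have e2 := hQ₂ s a
    have e3 := hQC s a
    simp only [hF]
    nlinarith [h5, e1, e2, e3]
  -- so M ≤ γ M, hence M ≤ 0
  have hMle : M ≤ γ * M := by
    obtain ⟨x, _, hx⟩ := Finset.exists_mem_eq_sup' (univ_nonempty (α := S × A)) F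
    calc M = F x := by rw [hM, hx]
      _ = F (x.1, x.2) := by rfl
      _ ≤ γ * M := hstep x.1 x.2
  have hM0 : M ≤ 0 := by nlinarith
  have := hFle s₀ a₀
  simp only [hF] at this
  linarith
end

section
/- Lower bound for composed Q-functions (second half of Lemma 1): With Q_Σ = (Q1*+Q2*)/2 and Q_C* as the optimal soft Q-function for r_C = (r1+r2)/2, one has Q_C*(s,a) ≥ Q_Σ(s,a) − C*(s,a) for all s, a, where C* is the unique fixed point of the contraction C(s,a) ↦ γ Σ_{s'} p(s'|s,a) [ (1/2) D_{1/2}(π1*(·|s') ‖ π2*(·|s')) + max_{a'} C(s',a') ], with π_i*(a|s) = exp(Q_i*(s,a))/Σ_{a'} exp(Q_i*(s,a')). -/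
lemma sqrt_exp_eq (x : ℝ) : Real.sqrt (Real.exp x) = Real.exp (x / 2) := by
  rw [show Real.exp x = Real.exp (x/2) * Real.exp (x/2) by rw [← Real.exp_add]; ring_nf,
    Real.sqrt_mul_self (Real.exp_pos _).le]

lemma combine_sums {S : Type} [Fintype S] (f₁ f₂ f₃ f₄ f₅ : S → ℝ)
    (h : ∀ i, (f₁ i + f₂ i) / 2 - f₃ i - f₄ i = f₅ i) :
    ((∑ i, f₁ i) + (∑ i, f₂ i)) / 2 - (∑ i, f₃ i) - (∑ i, f₄ i) = ∑ i, f₅ i := by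
  rw [← Finset.sum_add_distrib, Finset.sum_div, ← Finset.sum_sub_distrib,
    ← Finset.sum_sub_distrib]
  exact Finset.sum_congr rfl fun i _ => h i

/-- Lower bound of Lemma 1: Q_C* ≥ Q_Σ − C*, where C* is the fixed point of the
divergence-driven Bellman recursion. -/
theorem composed_Q_lower_bound
    {S A : Type} [Fintype S] [Fintype A] [Nonempty A]
    (γ : ℝ) (hγ0 : 0 ≤ γ) (hγ1 : γ < 1)
    (p : S → A → S → ℝ)
    (hp0 : ∀ s a s', 0 ≤ p s a s')
    (hp1 : ∀ s a, ∑ s', p s a s' = 1)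
    (r₁ r₂ : S → A → ℝ) (Q₁ Q₂ QC : S → A → ℝ)
    (hQ₁ : ∀ s a, Q₁ s a =
      r₁ s a + γ * ∑ s', p s a s' * Real.log (∑ a', Real.exp (Q₁ s' a')))
    (hQ₂ : ∀ s a, Q₂ s a =
      r₂ s a + γ * ∑ s', p s a s' * Real.log (∑ a', Real.exp (Q₂ s' a')))
    (hQC : ∀ s a, QC s a =
      (r₁ s a + r₂ s a) / 2 +
        γ * ∑ s', p s a s' * Real.log (∑ a', Real.exp (QC s' a')))
    (π₁ π₂ : S → A → ℝ)
    (hπ₁ : ∀ s a, π₁ s a = Real.exp (Q₁ s a) / ∑ a', Real.exp (Q₁ s a'))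
    (hπ₂ : ∀ s a, π₂ s a = Real.exp (Q₂ s a) / ∑ a', Real.exp (Q₂ s a'))
    (C : S → A → ℝ)
    (hC : ∀ s a, C s a =
      γ * ∑ s', p s a s' *
        ((1 / 2) * (-2 * Real.log (∑ a', Real.sqrt (π₁ s' a' * π₂ s' a'))) +
          Finset.univ.sup' Finset.univ_nonempty (fun a' => C s' a')) ) :
    ∀ s a, (Q₁ s a + Q₂ s a) / 2 - C s a ≤ QC s a := by
  rcases isEmpty_or_nonempty S with hS | hS
  · intro s; exact (hS.false s).elim
  have hpos : ∀ (Q : S → A → ℝ) (s : S), (0:ℝ) < ∑ a', Real.exp (Q s a') := fun Q s =>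
    Finset.sum_pos (fun a _ => Real.exp_pos _) Finset.univ_nonempty
  have hposσ : ∀ s : S, (0:ℝ) < ∑ a', Real.exp ((Q₁ s a' + Q₂ s a') / 2) :=
    fun s => Finset.sum_pos (fun a _ => Real.exp_pos _) Finset.univ_nonempty
  -- the Rényi-divergence identity
  have hid : ∀ s : S, Real.log (∑ a', Real.sqrt (π₁ s a' * π₂ s a'))
      = Real.log (∑ a', Real.exp ((Q₁ s a' + Q₂ s a') / 2))
        - (Real.log (∑ a', Real.exp (Q₁ s a')) + Real.log (∑ a', Real.exp (Q₂ s a'))) / 2 := by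
    intro s
    have h1 : ∀ a' : A, Real.sqrt (π₁ s a' * π₂ s a')
        = Real.exp ((Q₁ s a' + Q₂ s a') / 2) /
          Real.sqrt ((∑ a'', Real.exp (Q₁ s a'')) * (∑ a'', Real.exp (Q₂ s a''))) := by
      intro a'
      rw [hπ₁, hπ₂, div_mul_div_comm, Real.sqrt_div (mul_nonneg (Real.exp_pos _).le (Real.exp_pos _).le) _,
        ← Real.exp_add, sqrt_exp_eq]
    rw [Finset.sum_congr rfl (fun a' _ => h1 a'), ← Finset.sum_div,
      Real.log_div (hposσ s).ne' (Real.sqrt_pos.mpr (mul_pos (hpos Q₁ s) (hpos Q₂ s))).ne', Real.log_sqrt (mul_nonneg (hpos Q₁ s).le (hpos Q₂ s).le),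
      Real.log_mul (hpos Q₁ s).ne' (hpos Q₂ s).ne']
  -- the deficit function and its sup
  set D : S → A → ℝ := fun s a => (Q₁ s a + Q₂ s a) / 2 - C s a - QC s a with hD
  set M : ℝ := Finset.univ.sup' Finset.univ_nonempty (fun x : S × A => D x.1 x.2) with hM
  have hDM : ∀ s a, D s a ≤ M := fun s a =>
    Finset.le_sup' (f := fun x : S × A => D x.1 x.2) (b := (s, a)) (Finset.mem_univ _)
  -- rewrite D as a single sum
  have hDeq : ∀ s a, D s a = ∑ s', γ * (p s a s' *
      (Real.log (∑ a', Real.exp ((Q₁ s' a' + Q₂ s' a') / 2))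
        - Finset.univ.sup' Finset.univ_nonempty (fun a' => C s' a')
        - Real.log (∑ a', Real.exp (QC s' a')))) := by
    intro s a
    simp only [hD]
    rw [hQ₁ s a, hQ₂ s a, hQC s a, hC s a, Finset.mul_sum, Finset.mul_sum,
      Finset.mul_sum, Finset.mul_sum]
    have key := combine_sums
      (fun i => γ * (p s a i * Real.log (∑ a', Real.exp (Q₁ i a'))))
      (fun i => γ * (p s a i * Real.log (∑ a', Real.exp (Q₂ i a'))))
      (fun i => γ * (p s a i *
        ((1 / 2) * (-2 * Real.log (∑ a', Real.sqrt (π₁ i a' * π₂ i a'))) +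
          Finset.univ.sup' Finset.univ_nonempty (fun a' => C i a'))))
      (fun i => γ * (p s a i * Real.log (∑ a', Real.exp (QC i a'))))
      (fun i => γ * (p s a i *
        (Real.log (∑ a', Real.exp ((Q₁ i a' + Q₂ i a') / 2))
          - Finset.univ.sup' Finset.univ_nonempty (fun a' => C i a')
          - Real.log (∑ a', Real.exp (QC i a')))))
      (fun i => by simp only [hid i]; ring)
    linarith [key]
  -- the key contraction bound
  have hbound : ∀ s a, D s a ≤ γ * M := by
    intro s a
    rw [hDeq s a]
    have hbr : ∀ s' : S,
        Real.log (∑ a', Real.exp ((Q₁ s' a' + Q₂ s' a') / 2))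
          - Finset.univ.sup' Finset.univ_nonempty (fun a' => C s' a')
          - Real.log (∑ a', Real.exp (QC s' a')) ≤ M := by
      intro s'
      set mC := Finset.univ.sup' Finset.univ_nonempty (fun a' => C s' a') with hmC
      have h1 : Real.exp (-mC - M) * (∑ a', Real.exp ((Q₁ s' a' + Q₂ s' a') / 2))
          ≤ ∑ a', Real.exp (QC s' a') := by
        rw [Finset.mul_sum]
        apply Finset.sum_le_sum
        intro a' _
        rw [← Real.exp_add]
        apply Real.exp_le_exp.mpr
        have h2 : D s' a' ≤ M := hDM s' a'
        have h3 : C s' a' ≤ mC := by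
          rw [hmC]; exact Finset.le_sup' (f := fun a'' => C s' a'') (Finset.mem_univ a')
        simp only [hD] at h2
        linarith
      have h4 := Real.log_le_log (mul_pos (Real.exp_pos _) (hposσ s')) h1
      rw [Real.log_mul (Real.exp_pos _).ne' (hposσ s').ne', Real.log_exp] at h4
      linarith
    calc ∑ s', γ * (p s a s' *
          (Real.log (∑ a', Real.exp ((Q₁ s' a' + Q₂ s' a') / 2))
            - Finset.univ.sup' Finset.univ_nonempty (fun a' => C s' a')
            - Real.log (∑ a', Real.exp (QC s' a'))))
        ≤ ∑ s', γ * (p s a s' * M) := by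
          exact Finset.sum_le_sum fun s' _ => mul_le_mul_of_nonneg_left
            (mul_le_mul_of_nonneg_left (hbr s') (hp0 s a s')) hγ0
      _ = γ * M := by
          rw [← Finset.mul_sum, ← Finset.sum_mul, hp1]; ring
  -- conclude M ≤ 0
  have hMγ : M ≤ γ * M := by
    rw [hM]
    exact Finset.sup'_le _ _ fun x _ => hbound x.1 x.2
  have hM0 : M ≤ 0 := by nlinarith
  intro s a
  have := hDM s a
  simp only [hD] at this
  linarith
end

section
/- Corollary 1: Under the hypotheses of Lemma 1, the optimal soft value function of the composed task satisfies V_Σ(s) ≥ V_C*(s) ≥ V_Σ(s) − max_a C*(s,a) for all states s, where V_Σ(s) = log Σ_a exp(Q_Σ(s,a)), V_C*(s) = log Σ_a exp(Q_C*(s,a)), Q_Σ = (Q1*+Q2*)/2, and C* is as in Lemma 1. -/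
/-!
Both bounds come from comparing Q-functions through the soft Bellman equations: if `Q - Q'` is
everywhere at most `γ` times the expected gap of the log-sum-exp values at the next state, then
the largest gap `M` satisfies `M ≤ γ M`, so `Q ≤ Q'`. Convexity of log-sum-exp (Cauchy–Schwarz)
gives `V_Σ ≤ (V₁ + V₂) / 2`, which yields `Q_C* ≤ Q_Σ`. Conversely, the Rényi-1/2 divergence of
the softmax policies equals `V₁ + V₂ - 2 V_Σ`, so `C*` accumulates exactly the gap
`(V₁ + V₂) / 2 - V_Σ`, and this is what lets `Q_Σ - C*` be compared with `Q_C*`. Monotonicity of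
log-sum-exp turns both Q-bounds into the value bounds.
-/

open Finset Real

noncomputable def logSumExp {A : Type*} [Fintype A] (f : A → ℝ) : ℝ :=
  log (∑ a, exp (f a))

noncomputable def softmax {A : Type*} [Fintype A] (f : A → ℝ) (a : A) : ℝ :=
  exp (f a) / ∑ a', exp (f a')

lemma exp_midpoint (x y : ℝ) : exp ((x + y) / 2) = √(exp x) * √(exp y) := by
  rw [add_div, exp_add, exp_half, exp_half]

section LogSumExp

variable {A : Type*} [Fintype A] [Nonempty A]

lemma sum_exp_pos (f : A → ℝ) : 0 < ∑ a, exp (f a) :=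
  sum_pos (fun a _ => exp_pos (f a)) univ_nonempty

lemma logSumExp_add_const (f : A → ℝ) (c : ℝ) :
    logSumExp (fun a => f a + c) = logSumExp f + c := by
  simp only [logSumExp, exp_add, ← sum_mul]
  rw [log_mul (sum_exp_pos f).ne' (exp_pos c).ne', log_exp]

lemma logSumExp_mono {f g : A → ℝ} (h : ∀ a, f a ≤ g a) : logSumExp f ≤ logSumExp g :=
  log_le_log (sum_exp_pos f) (sum_le_sum fun a _ => exp_le_exp.2 (h a))

lemma logSumExp_le_add {f g : A → ℝ} {c : ℝ} (h : ∀ a, f a ≤ g a + c) :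
    logSumExp f ≤ logSumExp g + c :=
  logSumExp_add_const g c ▸ logSumExp_mono h

lemma log_sqrt_sum_exp_mul (f g : A → ℝ) :
    log (√(∑ a, exp (f a)) * √(∑ a, exp (g a))) = (logSumExp f + logSumExp g) / 2 := by
  rw [log_mul (sqrt_pos.2 (sum_exp_pos f)).ne' (sqrt_pos.2 (sum_exp_pos g)).ne',
    log_sqrt (sum_exp_pos f).le, log_sqrt (sum_exp_pos g).le, logSumExp, logSumExp]
  ring

lemma logSumExp_midpoint_le (f g : A → ℝ) :
    logSumExp (fun a => (f a + g a) / 2) ≤ (logSumExp f + logSumExp g) / 2 := by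
  have hcs : ∑ a, exp ((f a + g a) / 2) ≤ √(∑ a, exp (f a)) * √(∑ a, exp (g a)) := by
    simpa only [exp_midpoint] using
      sum_sqrt_mul_sqrt_le univ (fun a => (exp_pos (f a)).le) (fun a => (exp_pos (g a)).le)
  exact (log_le_log (sum_exp_pos _) hcs).trans_eq (log_sqrt_sum_exp_mul f g)

lemma log_sum_sqrt_softmax_mul_softmax (f g : A → ℝ) :
    log (∑ a, √(softmax f a * softmax g a)) =
      logSumExp (fun a => (f a + g a) / 2) - (logSumExp f + logSumExp g) / 2 := by
  have hterm : ∀ a, √(softmax f a * softmax g a) =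
      exp ((f a + g a) / 2) / (√(∑ a, exp (f a)) * √(∑ a, exp (g a))) := fun a => by
    rw [softmax, softmax, div_mul_div_comm, sqrt_div' _ (mul_pos (sum_exp_pos f)
      (sum_exp_pos g)).le, sqrt_mul (exp_pos _).le, sqrt_mul (sum_exp_pos f).le, exp_midpoint]
  rw [sum_congr rfl fun a _ => hterm a, ← sum_div, log_div (sum_exp_pos _).ne'
    (mul_pos (sqrt_pos.2 (sum_exp_pos f)) (sqrt_pos.2 (sum_exp_pos g))).ne',
    log_sqrt_sum_exp_mul]
  rfl

end LogSumExp

lemma nonpos_of_forall_bound_imp_mul_bound {ι : Type*} [Finite ι] {γ : ℝ}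
    (hγ : γ < 1) {f : ι → ℝ} (h : ∀ M, (∀ i, f i ≤ M) → ∀ i, f i ≤ γ * M) (i : ι) : f i ≤ 0 := by
  have : Nonempty ι := ⟨i⟩
  obtain ⟨j, hj⟩ := Finite.exists_max f
  nlinarith [h (f j) hj j, hj i]

lemma sum_mul_le_of_le {ι : Type*} [Fintype ι] {w x : ι → ℝ} {M : ℝ}
    (hw0 : ∀ i, 0 ≤ w i) (hw1 : ∑ i, w i = 1) (hx : ∀ i, x i ≤ M) : ∑ i, w i * x i ≤ M :=
  calc ∑ i, w i * x i ≤ ∑ i, w i * M :=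
        sum_le_sum fun i _ => mul_le_mul_of_nonneg_left (hx i) (hw0 i)
    _ = M := by rw [← sum_mul, hw1, one_mul]

lemma bellman_average {S A : Type*} [Fintype S] {γ : ℝ} {p : S → A → S → ℝ}
    {r₁ r₂ Q₁ Q₂ : S → A → ℝ} {V₁ V₂ : S → ℝ}
    (hQ₁ : ∀ s a, Q₁ s a = r₁ s a + γ * ∑ s', p s a s' * V₁ s')
    (hQ₂ : ∀ s a, Q₂ s a = r₂ s a + γ * ∑ s', p s a s' * V₂ s') (s : S) (a : A) :
    (Q₁ s a + Q₂ s a) / 2 =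
      (r₁ s a + r₂ s a) / 2 + γ * ∑ s', p s a s' * ((V₁ s' + V₂ s') / 2) := by
  rw [hQ₁ s a, hQ₂ s a]
  simp only [mul_add, mul_div_assoc', ← sum_div, sum_add_distrib]
  ring

section SoftBellman

variable {S A : Type*} [Fintype S] [Fintype A] [Nonempty A]

lemma le_of_sub_le_mul_sum_logSumExp_sub {γ : ℝ} (hγ0 : 0 ≤ γ) (hγ1 : γ < 1)
    {p : S → A → S → ℝ} (hp0 : ∀ s a s', 0 ≤ p s a s')
    (hp1 : ∀ s a, ∑ s', p s a s' = 1) {Q Q' : S → A → ℝ}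
    (h : ∀ s a, Q s a - Q' s a ≤
      γ * ∑ s', p s a s' * (logSumExp (Q s') - logSumExp (Q' s'))) (s : S) (a : A) :
    Q s a ≤ Q' s a := by
  suffices ∀ q : S × A, Q q.1 q.2 - Q' q.1 q.2 ≤ 0 by linarith [this (s, a)]
  refine nonpos_of_forall_bound_imp_mul_bound hγ1 fun M hM q =>
    (h q.1 q.2).trans (mul_le_mul_of_nonneg_left ?_ hγ0)
  refine sum_mul_le_of_le (hp0 _ _) (hp1 _ _) fun s' => ?_
  have := logSumExp_le_add fun a' => sub_le_iff_le_add'.1 (hM (s', a'))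
  linarith

lemma composed_le_average {γ : ℝ} (hγ0 : 0 ≤ γ) (hγ1 : γ < 1) {p : S → A → S → ℝ}
    (hp0 : ∀ s a s', 0 ≤ p s a s') (hp1 : ∀ s a, ∑ s', p s a s' = 1)
    {r₁ r₂ Q₁ Q₂ QC : S → A → ℝ}
    (hQ₁ : ∀ s a, Q₁ s a = r₁ s a + γ * ∑ s', p s a s' * logSumExp (Q₁ s'))
    (hQ₂ : ∀ s a, Q₂ s a = r₂ s a + γ * ∑ s', p s a s' * logSumExp (Q₂ s'))
    (hQC : ∀ s a, QC s a = (r₁ s a + r₂ s a) / 2 + γ * ∑ s', p s a s' * logSumExp (QC s'))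
    (s : S) (a : A) : QC s a ≤ (Q₁ s a + Q₂ s a) / 2 := by
  refine le_of_sub_le_mul_sum_logSumExp_sub (Q' := fun s a => (Q₁ s a + Q₂ s a) / 2)
    hγ0 hγ1 hp0 hp1 (fun s a => ?_) s a
  calc QC s a - (Q₁ s a + Q₂ s a) / 2
      = γ * ∑ s', p s a s' *
          (logSumExp (QC s') - (logSumExp (Q₁ s') + logSumExp (Q₂ s')) / 2) := by
        rw [hQC s a, bellman_average hQ₁ hQ₂ s a]
        simp only [mul_sub, sum_sub_distrib]
        ring
    _ ≤ γ * ∑ s', p s a s' *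
          (logSumExp (QC s') - logSumExp fun a => (Q₁ s' a + Q₂ s' a) / 2) := by
        gcongr with s'
        · exact hp0 s a s'
        · exact logSumExp_midpoint_le (Q₁ s') (Q₂ s')

lemma average_sub_le_composed {γ : ℝ} (hγ0 : 0 ≤ γ) (hγ1 : γ < 1) {p : S → A → S → ℝ}
    (hp0 : ∀ s a s', 0 ≤ p s a s') (hp1 : ∀ s a, ∑ s', p s a s' = 1)
    {r₁ r₂ Q₁ Q₂ QC C : S → A → ℝ}
    (hQ₁ : ∀ s a, Q₁ s a = r₁ s a + γ * ∑ s', p s a s' * logSumExp (Q₁ s'))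
    (hQ₂ : ∀ s a, Q₂ s a = r₂ s a + γ * ∑ s', p s a s' * logSumExp (Q₂ s'))
    (hQC : ∀ s a, QC s a = (r₁ s a + r₂ s a) / 2 + γ * ∑ s', p s a s' * logSumExp (QC s'))
    (hC : ∀ s a, C s a = γ * ∑ s', p s a s' *
      ((logSumExp (Q₁ s') + logSumExp (Q₂ s')) / 2 -
        (logSumExp fun a => (Q₁ s' a + Q₂ s' a) / 2) + univ.sup' univ_nonempty (C s')))
    (s : S) (a : A) : (Q₁ s a + Q₂ s a) / 2 - C s a ≤ QC s a := by
  refine le_of_sub_le_mul_sum_logSumExp_sub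
    (Q := fun s a => (Q₁ s a + Q₂ s a) / 2 - C s a)
    hγ0 hγ1 hp0 hp1 (fun s a => ?_) s a
  calc (Q₁ s a + Q₂ s a) / 2 - C s a - QC s a
      = γ * ∑ s', p s a s' * ((logSumExp fun a => (Q₁ s' a + Q₂ s' a) / 2) -
          univ.sup' univ_nonempty (C s') - logSumExp (QC s')) := by
        rw [hQC s a, bellman_average hQ₁ hQ₂ s a, hC s a]
        simp only [mul_sub, mul_add, sum_sub_distrib, sum_add_distrib]
        ring
    _ ≤ γ * ∑ s', p s a s' *
          (logSumExp (fun a => (Q₁ s' a + Q₂ s' a) / 2 - C s' a) - logSumExp (QC s')) := by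
        gcongr with s'
        · exact hp0 s a s'
        · have : (logSumExp fun a => (Q₁ s' a + Q₂ s' a) / 2) ≤
              logSumExp (fun a => (Q₁ s' a + Q₂ s' a) / 2 - C s' a) +
                univ.sup' univ_nonempty (C s') :=
            logSumExp_le_add fun a => by linarith [le_sup' (C s') (mem_univ a)]
          linarith

end SoftBellman

/-- Corollary 1: bounds on the optimal soft value function of the composed task. -/
theorem composed_value_bounds
    {S A : Type} [Fintype S] [Fintype A] [Nonempty A]
    (γ : ℝ) (hγ0 : 0 ≤ γ) (hγ1 : γ < 1)
    (p : S → A → S → ℝ)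
    (hp0 : ∀ s a s', 0 ≤ p s a s')
    (hp1 : ∀ s a, ∑ s', p s a s' = 1)
    (r₁ r₂ : S → A → ℝ) (Q₁ Q₂ QC : S → A → ℝ)
    (hQ₁ : ∀ s a, Q₁ s a =
      r₁ s a + γ * ∑ s', p s a s' * Real.log (∑ a', Real.exp (Q₁ s' a')))
    (hQ₂ : ∀ s a, Q₂ s a =
      r₂ s a + γ * ∑ s', p s a s' * Real.log (∑ a', Real.exp (Q₂ s' a')))
    (hQC : ∀ s a, QC s a =
      (r₁ s a + r₂ s a) / 2 +
        γ * ∑ s', p s a s' * Real.log (∑ a', Real.exp (QC s' a')))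
    (π₁ π₂ : S → A → ℝ)
    (hπ₁ : ∀ s a, π₁ s a = Real.exp (Q₁ s a) / ∑ a', Real.exp (Q₁ s a'))
    (hπ₂ : ∀ s a, π₂ s a = Real.exp (Q₂ s a) / ∑ a', Real.exp (Q₂ s a'))
    (C : S → A → ℝ)
    (hC : ∀ s a, C s a =
      γ * ∑ s', p s a s' *
        ((1 / 2) * (-2 * Real.log (∑ a', Real.sqrt (π₁ s' a' * π₂ s' a'))) +
          Finset.univ.sup' Finset.univ_nonempty (fun a' => C s' a'))) :
    ∀ s : S,
      Real.log (∑ a, Real.exp (QC s a)) ≤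
        Real.log (∑ a, Real.exp ((Q₁ s a + Q₂ s a) / 2)) ∧
      Real.log (∑ a, Real.exp ((Q₁ s a + Q₂ s a) / 2)) -
          Finset.univ.sup' Finset.univ_nonempty (fun a => C s a) ≤
        Real.log (∑ a, Real.exp (QC s a)) := by
  have hπ : ∀ s a, π₁ s a * π₂ s a = softmax (Q₁ s) a * softmax (Q₂ s) a := fun s a => by
    rw [hπ₁, hπ₂, softmax, softmax]
  have hC_logSumExp : ∀ s a, C s a = γ * ∑ s', p s a s' *
      ((logSumExp (Q₁ s') + logSumExp (Q₂ s')) / 2 -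
        (logSumExp fun a => (Q₁ s' a + Q₂ s' a) / 2) + univ.sup' univ_nonempty (C s')) :=
    fun s a => by
      rw [hC s a]
      congr 1
      refine sum_congr rfl fun s' _ => ?_
      simp only [hπ, log_sum_sqrt_softmax_mul_softmax]
      ring
  intro s
  refine ⟨logSumExp_mono (composed_le_average hγ0 hγ1 hp0 hp1 hQ₁ hQ₂ hQC s), ?_⟩
  refine sub_le_iff_le_add.2 (logSumExp_le_add fun a => ?_)
  have := average_sub_le_composed hγ0 hγ1 hp0 hp1 hQ₁ hQ₂ hQC hC_logSumExp s a
  linarith [le_sup' (C s) (mem_univ a)]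
end

section
/- Generalization of the lower bound in Lemma 1 to K policies: if Q_1*, …, Q_K* are optimal soft Q-functions for rewards r_1, …, r_K and Q_Σ = (1/K)Σ_i Q_i*, then the optimal soft Q-function Q_C* for r_C = (1/K)Σ_i r_i satisfies Q_C* ≤ Q_Σ pointwise. -/
open Finset Real

lemma jensen_exp (K : ℕ) (hK : 0 < K) (z : Fin K → ℝ) :
    Real.exp ((1 / (K : ℝ)) * ∑ i, z i) ≤ (1 / (K : ℝ)) * ∑ i, Real.exp (z i) := by
  have hKpos : (0:ℝ) < K := by exact_mod_cast hK
  have h := convexOn_exp.map_sum_le (t := Finset.univ) (w := fun _ : Fin K => (1 / (K:ℝ)))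
    (p := z) (fun i _ => by positivity)
    (by simp [Finset.card_univ]; field_simp)
    (fun i _ => trivial)
  simpa [smul_eq_mul, ← Finset.mul_sum] using h

lemma lse_avg {A : Type} [Fintype A] [Nonempty A] (K : ℕ) (hK : 0 < K)
    (x : Fin K → A → ℝ) :
    Real.log (∑ a, Real.exp ((1 / (K : ℝ)) * ∑ i, x i a)) ≤
      (1 / (K : ℝ)) * ∑ i, Real.log (∑ a, Real.exp (x i a)) := by
  have hKpos : (0:ℝ) < K := by exact_mod_cast hK
  set S : Fin K → ℝ := fun i => ∑ a, Real.exp (x i a) with hSdef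
  have hS : ∀ i, 0 < S i := fun i =>
    Finset.sum_pos (fun a _ => Real.exp_pos _) Finset.univ_nonempty
  have key : ∑ a, Real.exp ((1 / (K : ℝ)) * ∑ i, x i a) ≤
      Real.exp ((1 / (K : ℝ)) * ∑ i, Real.log (S i)) := by
    have step : ∀ a : A, Real.exp ((1 / (K : ℝ)) * ∑ i, x i a) ≤
        Real.exp ((1 / (K : ℝ)) * ∑ i, Real.log (S i)) *
          ((1 / (K : ℝ)) * ∑ i, Real.exp (x i a) / S i) := by
      intro a
      have hsplit : (1 / (K : ℝ)) * ∑ i, x i a =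
          (1 / (K : ℝ)) * ∑ i, Real.log (S i) +
          (1 / (K : ℝ)) * ∑ i, (x i a - Real.log (S i)) := by
        rw [← mul_add, ← Finset.sum_add_distrib]
        ring_nf
      rw [hsplit, Real.exp_add]
      apply mul_le_mul_of_nonneg_left _ (Real.exp_pos _).le
      have := jensen_exp K hK (fun i => x i a - Real.log (S i))
      refine this.trans_eq ?_
      congr 1
      apply Finset.sum_congr rfl
      intro i _
      rw [Real.exp_sub, Real.exp_log (hS i)]
    calc ∑ a, Real.exp ((1 / (K : ℝ)) * ∑ i, x i a)
        ≤ ∑ a : A, Real.exp ((1 / (K : ℝ)) * ∑ i, Real.log (S i)) *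
            ((1 / (K : ℝ)) * ∑ i, Real.exp (x i a) / S i) :=
          Finset.sum_le_sum (fun a _ => step a)
      _ = Real.exp ((1 / (K : ℝ)) * ∑ i, Real.log (S i)) := by
          rw [← Finset.mul_sum]
          have : ∑ a : A, ((1 / (K : ℝ)) * ∑ i, Real.exp (x i a) / S i) = 1 := by
            rw [← Finset.mul_sum, Finset.sum_comm]
            have : ∀ i : Fin K, ∑ a, Real.exp (x i a) / S i = 1 := by
              intro i
              rw [← Finset.sum_div]
              exact div_self (hS i).ne'
            simp [this]
            field_simp
          rw [this, mul_one]
  calc Real.log (∑ a, Real.exp ((1 / (K : ℝ)) * ∑ i, x i a))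
      ≤ Real.log (Real.exp ((1 / (K : ℝ)) * ∑ i, Real.log (S i))) :=
        Real.log_le_log (Finset.sum_pos (fun a _ => Real.exp_pos _) Finset.univ_nonempty) key
    _ = (1 / (K : ℝ)) * ∑ i, Real.log (S i) := Real.log_exp _

/-- Generalization of the upper bound of Lemma 1 to K policies: the optimal soft
Q-function of the averaged reward is at most the average of the constituent
optimal soft Q-functions. -/
theorem composed_Q_upper_bound_K
    {S A : Type} [Fintype S] [Fintype A] [Nonempty A]
    (γ : ℝ) (hγ0 : 0 ≤ γ) (hγ1 : γ < 1)
    (p : S → A → S → ℝ)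
    (hp0 : ∀ s a s', 0 ≤ p s a s')
    (hp1 : ∀ s a, ∑ s', p s a s' = 1)
    (K : ℕ) (hK : 0 < K)
    (r : Fin K → S → A → ℝ) (Q : Fin K → S → A → ℝ) (QC : S → A → ℝ)
    (hQ : ∀ i s a, Q i s a =
      r i s a + γ * ∑ s', p s a s' * Real.log (∑ a', Real.exp (Q i s' a')))
    (hQC : ∀ s a, QC s a =
      (1 / (K : ℝ)) * (∑ i, r i s a) +
        γ * ∑ s', p s a s' * Real.log (∑ a', Real.exp (QC s' a'))) :
    ∀ s a, QC s a ≤ (1 / (K : ℝ)) * ∑ i, Q i s a := by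
  cases isEmpty_or_nonempty S with
  | inl h => exact fun s => (IsEmpty.false s).elim
  | inr h =>
    have hKpos : (0:ℝ) < K := by exact_mod_cast hK
    set g : S × A → ℝ := fun q => QC q.1 q.2 - (1 / (K : ℝ)) * ∑ i, Q i q.1 q.2 with hg
    obtain ⟨q₀, -, hq₀⟩ := Finset.exists_max_image Finset.univ g Finset.univ_nonempty
    set D := g q₀ with hD
    have hmax : ∀ s a, g (s, a) ≤ D := fun s a => hq₀ (s, a) (Finset.mem_univ _)
    -- average of the Bellman equations
    have havg : ∀ s a, (1 / (K : ℝ)) * ∑ i, Q i s a =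
        (1 / (K : ℝ)) * (∑ i, r i s a) +
          γ * ∑ s', p s a s' * ((1 / (K : ℝ)) * ∑ i, Real.log (∑ a', Real.exp (Q i s' a'))) := by
      intro s a
      have : ∑ i, Q i s a = ∑ i, (r i s a + γ * ∑ s', p s a s' * Real.log (∑ a', Real.exp (Q i s' a'))) :=
        Finset.sum_congr rfl fun i _ => hQ i s a
      rw [this, Finset.sum_add_distrib, mul_add]
      congr 1
      simp only [Finset.mul_sum]
      rw [Finset.sum_comm]
      refine Finset.sum_congr rfl fun s' _ => Finset.sum_congr rfl fun i _ => by ring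
    -- g in Bellman form
    have hgform : ∀ s a, g (s, a) =
        γ * ∑ s', p s a s' * (Real.log (∑ a', Real.exp (QC s' a')) -
          (1 / (K : ℝ)) * ∑ i, Real.log (∑ a', Real.exp (Q i s' a'))) := by
      intro s a
      simp only [hg]
      rw [hQC s a, havg s a]
      have e : ∑ s', p s a s' * (Real.log (∑ a', Real.exp (QC s' a')) -
          (1 / (K : ℝ)) * ∑ i, Real.log (∑ a', Real.exp (Q i s' a'))) =
          ∑ s', p s a s' * Real.log (∑ a', Real.exp (QC s' a')) -
          ∑ s', p s a s' * ((1 / (K : ℝ)) * ∑ i, Real.log (∑ a', Real.exp (Q i s' a'))) := by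
        rw [← Finset.sum_sub_distrib]
        exact Finset.sum_congr rfl fun s' _ => mul_sub _ _ _
      rw [e]
      ring
    -- per-state bound
    have hstate : ∀ s' : S, Real.log (∑ a', Real.exp (QC s' a')) -
        (1 / (K : ℝ)) * ∑ i, Real.log (∑ a', Real.exp (Q i s' a')) ≤ D := by
      intro s'
      have h1 : Real.log (∑ a', Real.exp (QC s' a')) ≤
          D + Real.log (∑ a', Real.exp ((1 / (K : ℝ)) * ∑ i, Q i s' a')) := by
        have hle : ∀ a', Real.exp (QC s' a') ≤
            Real.exp D * Real.exp ((1 / (K : ℝ)) * ∑ i, Q i s' a') := by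
          intro a'
          rw [← Real.exp_add]
          apply Real.exp_le_exp.mpr
          have := hmax s' a'
          simp only [hg] at this
          linarith
        have hsum : ∑ a', Real.exp (QC s' a') ≤
            Real.exp D * ∑ a', Real.exp ((1 / (K : ℝ)) * ∑ i, Q i s' a') := by
          rw [Finset.mul_sum]
          exact Finset.sum_le_sum fun a' _ => hle a'
        calc Real.log (∑ a', Real.exp (QC s' a'))
            ≤ Real.log (Real.exp D * ∑ a', Real.exp ((1 / (K : ℝ)) * ∑ i, Q i s' a')) :=
              Real.log_le_log (Finset.sum_pos (fun a _ => Real.exp_pos _) Finset.univ_nonempty) hsum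
          _ = D + Real.log (∑ a', Real.exp ((1 / (K : ℝ)) * ∑ i, Q i s' a')) := by
              rw [Real.log_mul (Real.exp_pos _).ne'
                (Finset.sum_pos (fun a _ => Real.exp_pos _) Finset.univ_nonempty).ne', Real.log_exp]
      have h2 := lse_avg K hK (fun i a' => Q i s' a')
      linarith
    -- contraction
    have hcontr : D ≤ γ * D := by
      obtain ⟨s₀, a₀⟩ := q₀
      calc D = γ * ∑ s', p s₀ a₀ s' * (Real.log (∑ a', Real.exp (QC s' a')) -
            (1 / (K : ℝ)) * ∑ i, Real.log (∑ a', Real.exp (Q i s' a'))) := hgform s₀ a₀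
        _ ≤ γ * ∑ s', p s₀ a₀ s' * D :=
            mul_le_mul_of_nonneg_left (Finset.sum_le_sum fun s' _ =>
              mul_le_mul_of_nonneg_left (hstate s') (hp0 s₀ a₀ s')) hγ0
        _ = γ * D := by rw [← Finset.sum_mul, hp1, one_mul]
    have hD0 : D ≤ 0 := by
      by_contra hpos
      push_neg at hpos
      have h2 : γ * D < 1 * D := mul_lt_mul_of_pos_right hγ1 hpos
      linarith
    intro s a
    have h1 := hmax s a
    simp only [hg] at h1
    exact sub_nonpos.mp (h1.trans hD0)
end

section
/- The Rényi divergence of order 1/2 between Boltzmann distributions controls the difference of soft maxima: for Q1, Q2 : A → ℝ on a finite set A, with π_i the Boltzmann distribution of Q_i, |log Σ_a exp((Q1(a)+Q2(a))/2) − (1/2)(log Σ_a exp Q1(a) + log Σ_a exp Q2(a))| = (1/2) D_{1/2}(π1‖π2). -/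
/-- The difference between the soft maximum of the average and the average of the
soft maxima equals exactly half the (nonnegative) Rényi-1/2 divergence of the
induced Boltzmann distributions. -/
theorem logsumexp_gap_eq_renyi_half
    {A : Type} [Fintype A] [Nonempty A]
    (Q₁ Q₂ π₁ π₂ : A → ℝ)
    (hπ₁ : ∀ a, π₁ a = Real.exp (Q₁ a) / ∑ a', Real.exp (Q₁ a'))
    (hπ₂ : ∀ a, π₂ a = Real.exp (Q₂ a) / ∑ a', Real.exp (Q₂ a')) :
    |Real.log (∑ a, Real.exp ((Q₁ a + Q₂ a) / 2)) -
        (Real.log (∑ a, Real.exp (Q₁ a)) + Real.log (∑ a, Real.exp (Q₂ a))) / 2| =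
      (1 / 2) * (-2 * Real.log (∑ a, Real.sqrt (π₁ a * π₂ a))) ∧
    0 ≤ -2 * Real.log (∑ a, Real.sqrt (π₁ a * π₂ a)) := by
  set S₁ := ∑ a, Real.exp (Q₁ a) with hS₁
  set S₂ := ∑ a, Real.exp (Q₂ a) with hS₂
  set M := ∑ a, Real.exp ((Q₁ a + Q₂ a) / 2) with hM
  have hS₁pos : 0 < S₁ := Finset.sum_pos (fun a _ => Real.exp_pos _) Finset.univ_nonempty
  have hS₂pos : 0 < S₂ := Finset.sum_pos (fun a _ => Real.exp_pos _) Finset.univ_nonempty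
  have hMpos : 0 < M := Finset.sum_pos (fun a _ => Real.exp_pos _) Finset.univ_nonempty
  have hsqrtpos : 0 < Real.sqrt (S₁ * S₂) := Real.sqrt_pos.mpr (by positivity)
  -- key identity: ∑ √(π₁ π₂) = M / √(S₁ S₂)
  have hsum : (∑ a, Real.sqrt (π₁ a * π₂ a)) = M / Real.sqrt (S₁ * S₂) := by
    rw [hM, Finset.sum_div]
    refine Finset.sum_congr rfl fun a _ => ?_
    rw [hπ₁ a, hπ₂ a,
      show Real.exp (Q₁ a) / S₁ * (Real.exp (Q₂ a) / S₂)
        = (Real.exp (Q₁ a) * Real.exp (Q₂ a)) / (S₁ * S₂) by ring,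
      Real.sqrt_div (by positivity), ← Real.exp_add, ← Real.exp_half]
  -- log identity
  have hlog : Real.log (∑ a, Real.sqrt (π₁ a * π₂ a))
      = Real.log M - (Real.log S₁ + Real.log S₂) / 2 := by
    rw [hsum, Real.log_div hMpos.ne' hsqrtpos.ne', Real.log_sqrt (by positivity),
      Real.log_mul hS₁pos.ne' hS₂pos.ne']
  -- Cauchy-Schwarz: M² ≤ S₁ S₂
  have hCS : M ^ 2 ≤ S₁ * S₂ := by
    have := Finset.sum_mul_sq_le_sq_mul_sq Finset.univ
      (fun a => Real.exp (Q₁ a / 2)) (fun a => Real.exp (Q₂ a / 2))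
    simpa [sq, ← Real.exp_add, add_halves, ← add_div, hS₁, hS₂, hM] using this
  have hle : M ≤ Real.sqrt (S₁ * S₂) := by
    rw [show M = Real.sqrt (M ^ 2) from (Real.sqrt_sq hMpos.le).symm]
    exact Real.sqrt_le_sqrt hCS
  have hlogle : Real.log (∑ a, Real.sqrt (π₁ a * π₂ a)) ≤ 0 := by
    rw [hsum]
    exact Real.log_nonpos (by positivity) (div_le_one_of_le₀ hle hsqrtpos.le)
  constructor
  · rw [abs_of_nonpos (by rw [← hlog]; exact hlogle), hlog]; ring
  · linarith
end
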